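/- Gradient decomposition inequality: let A be real symmetric with c₁|ξ|² ≤ ξ̄ᵀAξ ≤ c₂|ξ|², let {e₁,…,e_n} be an orthonormal basis of ℝⁿ, and let g ∈ ℂⁿ. Define the 'conormal component' g_ν := e₁ · A g and tangential components g_j := e_j · g for j = 2,…,n. Then there is a constant C > 0 depending only on c₁, c₂, n such that |e₁|_A² |g|_A² ≤ |g_ν|² + C |g_ν| (Σ_{j=2}^n |g_j|²)^{1/2} + C Σ_{j=2}^n |g_j|², where the coefficient of |g_ν|² is exactly 1. -/
import Mathlib


open Matrix Complex BigOperators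

/-- The quadratic form ξ̄ᵀ A ξ for a real matrix `A` acting on `ℂⁿ`. -/
noncomputable def quadA {n : ℕ} (A : Matrix (Fin n) (Fin n) ℝ) (a b : Fin n → ℂ) : ℂ :=
  ∑ i, ∑ j, (starRingEnd ℂ) (a i) * (A i j : ℂ) * b j

/-- Parseval-type identity for a real orthogonal family (completeness form). -/
lemma parseval_aux {m : ℕ} (e : Fin m → Fin m → ℝ)
    (key : ∀ i i', ∑ k, (e k i : ℂ) * (e k i') = if i = i' then 1 else 0)
    (g : Fin m → ℂ) :
    ∑ k, Complex.normSq (∑ i, (e k i : ℂ) * g i) = ∑ i, Complex.normSq (g i) := by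
  have h : ((∑ k, Complex.normSq (∑ i, (e k i : ℂ) * g i) : ℝ) : ℂ)
      = ((∑ i, Complex.normSq (g i) : ℝ) : ℂ) := by
    push_cast
    calc ∑ k, ((Complex.normSq (∑ i, (e k i : ℂ) * g i) : ℂ))
        = ∑ k, (∑ i, (e k i : ℂ) * g i) * (starRingEnd ℂ) (∑ i, (e k i : ℂ) * g i) := by
          exact Finset.sum_congr rfl fun k _ => (Complex.mul_conj _).symm
      _ = ∑ k, ∑ i, ∑ i', ((e k i : ℂ) * (e k i')) * (g i * (starRingEnd ℂ) (g i')) := by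
          refine Finset.sum_congr rfl fun k _ => ?_
          rw [map_sum, Finset.sum_mul_sum]
          refine Finset.sum_congr rfl fun i _ => Finset.sum_congr rfl fun i' _ => ?_
          simp [Complex.conj_ofReal]; ring
      _ = ∑ i, ∑ i', (∑ k, (e k i : ℂ) * (e k i')) * (g i * (starRingEnd ℂ) (g i')) := by
          rw [Finset.sum_comm]
          refine Finset.sum_congr rfl fun i _ => ?_
          rw [Finset.sum_comm]
          refine Finset.sum_congr rfl fun i' _ => ?_
          rw [Finset.sum_mul]
      _ = ∑ i, (g i * (starRingEnd ℂ) (g i)) := by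
          refine Finset.sum_congr rfl fun i _ => ?_
          simp [key]
      _ = ∑ i, ((Complex.normSq (g i) : ℂ)) := by
          exact Finset.sum_congr rfl fun i _ => Complex.mul_conj _
  exact_mod_cast h

/-- Gradient decomposition inequality: there is a constant `C > 0` depending only on
`c₁, c₂, n` such that for every symmetric elliptic `A`, orthonormal basis `{e₀,…,e_n}`
and `g ∈ ℂ^{n+1}`, with conormal component `g_ν = e₀ · A g` and tangential components
`g_j = e_j · g`,
`|e₀|_A² |g|_A² ≤ |g_ν|² + C|g_ν|(Σ_{j≥1}|g_j|²)^{1/2} + C Σ_{j≥1}|g_j|²`,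
the coefficient of `|g_ν|²` being exactly `1`. -/
theorem stmt15 (n : ℕ) (c₁ c₂ : ℝ) (hc₁ : 0 < c₁) (hc₁₂ : c₁ ≤ c₂) :
    ∃ C > (0 : ℝ),
      ∀ (A : Matrix (Fin (n + 1)) (Fin (n + 1)) ℝ), A.IsSymm →
      (∀ ξ : Fin (n + 1) → ℂ,
        c₁ * ∑ i, Complex.normSq (ξ i) ≤ (quadA A ξ ξ).re ∧
        (quadA A ξ ξ).re ≤ c₂ * ∑ i, Complex.normSq (ξ i)) →
      ∀ (e : Fin (n + 1) → Fin (n + 1) → ℝ),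
        (∀ i j, e i ⬝ᵥ e j = if i = j then (1 : ℝ) else 0) →
      ∀ g : Fin (n + 1) → ℂ,
        (e 0 ⬝ᵥ A.mulVec (e 0)) * (quadA A g g).re
          ≤ Complex.normSq (∑ i, (e 0 i : ℂ) * ∑ j, (A i j : ℂ) * g j)
            + C * ‖∑ i, (e 0 i : ℂ) * ∑ j, (A i j : ℂ) * g j‖ *
                Real.sqrt (∑ j : Fin n, Complex.normSq (∑ i, (e j.succ i : ℂ) * g i))
            + C * ∑ j : Fin n, Complex.normSq (∑ i, (e j.succ i : ℂ) * g i) := by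
  have hc₂ : 0 < c₂ := lt_of_lt_of_le hc₁ hc₁₂
  refine ⟨c₂ ^ 2, by positivity, ?_⟩
  intro A hA hell e he g
  -- completeness of the orthonormal family
  have hE1 : (Matrix.of e) * (Matrix.of e)ᵀ = (1 : Matrix (Fin (n+1)) (Fin (n+1)) ℝ) := by
    ext i j
    simpa [Matrix.mul_apply, Matrix.one_apply, dotProduct] using he i j
  have hE2 := mul_eq_one_comm.mp hE1
  have keyR : ∀ i i', ∑ k, e k i * e k i' = if i = i' then (1 : ℝ) else 0 := by
    intro i i'
    have := congrFun (congrFun hE2 i) i'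
    simpa [Matrix.mul_apply, Matrix.one_apply] using this
  have key : ∀ i i', ∑ k, (e k i : ℂ) * (e k i') = if i = i' then 1 else 0 := by
    intro i i'
    calc ∑ k, (e k i : ℂ) * (e k i') = ((∑ k, e k i * e k i' : ℝ) : ℂ) := by push_cast; rfl
      _ = if i = i' then 1 else 0 := by rw [keyR i i']; split <;> norm_num
  -- notation
  set eC : Fin (n+1) → ℂ := fun i => (e 0 i : ℂ) with heC
  set α : ℂ := ∑ i, (e 0 i : ℂ) * g i with hα
  set gν : ℂ := ∑ i, (e 0 i : ℂ) * ∑ j, (A i j : ℂ) * g j with hgν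
  set β : ℝ := e 0 ⬝ᵥ A.mulVec (e 0) with hβdef
  set t : Fin (n+1) → ℂ := fun i => g i - α * eC i with ht
  set T : ℝ := ∑ j : Fin n, Complex.normSq (∑ i, (e j.succ i : ℂ) * g i) with hT
  -- basic sesquilinearity facts
  have hsym : ∀ a b, quadA A b a = (starRingEnd ℂ) (quadA A a b) := by
    intro a b
    simp only [quadA, map_sum, _root_.map_mul, Complex.conj_conj, Complex.conj_ofReal, RingHomCompTriple.comp_apply, RingHom.id_apply]
    rw [Finset.sum_comm]
    refine Finset.sum_congr rfl fun i _ => Finset.sum_congr rfl fun j _ => ?_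
    rw [show A j i = A i j from hA.apply i j]
    ring
  have hq_eC_g : quadA A eC g = gν := by
    simp only [quadA, heC, hgν, Complex.conj_ofReal, Finset.mul_sum, mul_assoc]
  have hq_eC_eC : quadA A eC eC = (β : ℂ) := by
    simp only [quadA, heC, hβdef, Complex.conj_ofReal, dotProduct, Matrix.mulVec]
    push_cast [Finset.mul_sum]
    exact Finset.sum_congr rfl fun i _ => Finset.sum_congr rfl fun j _ => by ring
  -- expansion
  have hq_eC_t : quadA A eC t = gν - α * β := by
    have : ∀ a, quadA A a t = quadA A a g - α * quadA A a eC := by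
      intro a
      simp only [quadA, ht, Finset.mul_sum, ← Finset.sum_sub_distrib]
      refine Finset.sum_congr rfl fun i _ => Finset.sum_congr rfl fun j _ => ?_
      ring
    rw [this, hq_eC_g, hq_eC_eC]
  have hq_g_g : quadA A g g
      = quadA A t t + (starRingEnd ℂ) α * (gν - α * β)
        + α * (starRingEnd ℂ) (gν - α * β) + α * (starRingEnd ℂ) α * β := by
    have hg : ∀ i, g i = t i + α * eC i := by intro i; simp [ht]
    have expand : quadA A g g
        = quadA A t t + (starRingEnd ℂ) α * quadA A eC t
          + α * quadA A t eC + α * (starRingEnd ℂ) α * quadA A eC eC := by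
      simp only [quadA, Finset.mul_sum, ← Finset.sum_add_distrib]
      refine Finset.sum_congr rfl fun i _ => Finset.sum_congr rfl fun j _ => ?_
      rw [hg i, hg j, map_add, _root_.map_mul]
      ring
    rw [expand, hq_eC_t, hsym eC t, hq_eC_t, hq_eC_eC]
  -- the key complex identity
  have hq_t_eC0 : True := trivial
  have main : (β : ℂ) * quadA A g g
      = (Complex.normSq gν : ℂ) - (Complex.normSq (gν - α * β) : ℂ)
        + (β : ℂ) * quadA A t t := by
    rw [hq_g_g, ← Complex.mul_conj, ← Complex.mul_conj]
    simp only [map_sub, _root_.map_mul, Complex.conj_ofReal]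
    ring
  -- real part version
  have mainRe : β * (quadA A g g).re
      = Complex.normSq gν - Complex.normSq (gν - α * β) + β * (quadA A t t).re := by
    have := congrArg Complex.re main
    simpa [Complex.re_ofReal_mul] using this
  -- Parseval: ∑ normSq (t i) = T
  have hsumt : ∑ i, Complex.normSq (t i) = T := by
    rw [← parseval_aux e key t]
    rw [Fin.sum_univ_succ]
    have hdot : ∀ k, (∑ i, (e k i : ℂ) * t i)
        = (∑ i, (e k i : ℂ) * g i) - α * ((e k ⬝ᵥ e 0 : ℝ) : ℂ) := by
      intro k
      simp only [ht, heC, mul_sub, Finset.sum_sub_distrib, dotProduct]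
      push_cast
      congr 1
      rw [Finset.mul_sum]
      exact Finset.sum_congr rfl fun i _ => by ring
    have h0 : (∑ i, (e 0 i : ℂ) * t i) = 0 := by
      rw [hdot 0, he 0 0]; simp [hα]
    have hsucc : ∀ j : Fin n, (∑ i, (e j.succ i : ℂ) * t i) = ∑ i, (e j.succ i : ℂ) * g i := by
      intro j
      rw [hdot j.succ, he j.succ 0]
      simp [Fin.succ_ne_zero]
    rw [h0]
    simp only [hsucc, Complex.normSq_zero, zero_add, hT]
  -- bounds
  have htt_nonneg : 0 ≤ (quadA A t t).re := by
    have h1 := (hell t).1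
    have h2 : 0 ≤ c₁ * ∑ i, Complex.normSq (t i) := by
      apply mul_nonneg hc₁.le
      exact Finset.sum_nonneg fun i _ => Complex.normSq_nonneg _
    linarith
  have htt_le : (quadA A t t).re ≤ c₂ * T := by
    have := (hell t).2
    rwa [hsumt] at this
  have hβ_le : β ≤ c₂ := by
    have h2 := (hell eC).2
    rw [show (quadA A eC eC).re = β by rw [hq_eC_eC]; simp] at h2
    have h00 : ∑ i, e 0 i * e 0 i = 1 := by
      have := he 0 0
      simpa [dotProduct] using this
    have : ∑ i, Complex.normSq (eC i) = 1 := by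
      simp only [heC, Complex.normSq_ofReal]
      rw [← h00]
    rw [this, mul_one] at h2
    exact h2
  have hβ_nonneg : 0 ≤ β := by
    have h1 := (hell eC).1
    rw [show (quadA A eC eC).re = β by rw [hq_eC_eC]; simp] at h1
    have hs : 0 ≤ ∑ i, Complex.normSq (eC i) :=
      Finset.sum_nonneg fun i _ => Complex.normSq_nonneg _
    nlinarith
  have hT_nonneg : 0 ≤ T :=
    Finset.sum_nonneg fun i _ => Complex.normSq_nonneg _
  have hbtt : β * (quadA A t t).re ≤ c₂ ^ 2 * T := by
    have h1 : β * (quadA A t t).re ≤ c₂ * (quadA A t t).re :=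
      mul_le_mul_of_nonneg_right hβ_le htt_nonneg
    have h2 : c₂ * (quadA A t t).re ≤ c₂ * (c₂ * T) :=
      mul_le_mul_of_nonneg_left htt_le hc₂.le
    nlinarith
  have hmid : 0 ≤ c₂ ^ 2 * ‖gν‖ * Real.sqrt T := by positivity
  have hz : 0 ≤ Complex.normSq (gν - α * β) := Complex.normSq_nonneg _
  calc β * (quadA A g g).re
      = Complex.normSq gν - Complex.normSq (gν - α * β) + β * (quadA A t t).re := mainRe
    _ ≤ Complex.normSq gν + c₂ ^ 2 * ‖gν‖ * Real.sqrt T + c₂ ^ 2 * T := by linarith
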